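/- arXiv:math/0605759 — 3 statements merged into one kernel-verified Lean document; each statement's English description precedes it below -/
import Mathlib

section
/- Let D : U → ℝ be a C² function on a connected open set U ⊆ ℝ² satisfying ∂²D/∂(x¹)² = 0 and ∂D/∂x² = D·∂D/∂x¹ on U, and suppose ∂D/∂x¹ is nowhere zero on U. Then locally D has the form D(x¹,x²) = (x¹ + k₁)/(k₂ − x²) for some constants k₁, k₂. -/
noncomputable def pd1 (f : ℝ × ℝ → ℝ) (p : ℝ × ℝ) : ℝ := fderiv ℝ f p (1, 0)

noncomputable def pd2 (f : ℝ × ℝ → ℝ) (p : ℝ × ℝ) : ℝ := fderiv ℝ f p (0, 1)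

/-!
Write `u = ∂₁D`. By symmetry of second derivatives and the two equations,
`∂₂u = ∂₁(∂₂D) = ∂₁(D u) = u² + D ∂₁u = u²`. Hence both `D / u - x¹` and `1 / u + x²` have
vanishing partial derivatives on `U`, so on the connected set `U` they are constants `k₁` and `k₂`.
Then `u = 1 / (k₂ - x²)` and `D = (x¹ + k₁) u`, on all of `U`.
-/

open Filter Topology

section Partials

variable {f g : ℝ × ℝ → ℝ} {p : ℝ × ℝ}

theorem DifferentiableAt.hasDerivAt_pd1 (hf : DifferentiableAt ℝ f p) :
    HasDerivAt (fun x => f (x, p.2)) (pd1 f p) p.1 :=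
  hf.hasFDerivAt.comp_hasDerivAt_of_eq p.1 ((hasDerivAt_id p.1).prodMk (hasDerivAt_const _ _)) rfl

theorem DifferentiableAt.hasDerivAt_pd2 (hf : DifferentiableAt ℝ f p) :
    HasDerivAt (fun y => f (p.1, y)) (pd2 f p) p.2 :=
  hf.hasFDerivAt.comp_hasDerivAt_of_eq p.2 ((hasDerivAt_const _ _).prodMk (hasDerivAt_id p.2)) rfl

theorem fderiv_eq_zero_of_pd1_eq_zero_of_pd2_eq_zero (h1 : pd1 f p = 0) (h2 : pd2 f p = 0) :
    fderiv ℝ f p = 0 :=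
  ContinuousLinearMap.prod_ext (ContinuousLinearMap.ext_ring (by simpa [pd1] using h1))
    (ContinuousLinearMap.ext_ring (by simpa [pd2] using h2))

theorem pd1_mul (hf : DifferentiableAt ℝ f p) (hg : DifferentiableAt ℝ g p) :
    pd1 (fun q => f q * g q) p = pd1 f p * g p + f p * pd1 g p := by
  rw [pd1, fderiv_fun_mul hf hg]
  simp only [add_apply, smul_apply, smul_eq_mul, pd1]
  ring

theorem ContDiffAt.differentiableAt_pd1 (hf : ContDiffAt ℝ 2 f p) :
    DifferentiableAt ℝ (pd1 f) p :=
  ((hf.fderiv_right (m := 1) (by norm_num)).clm_apply contDiffAt_const).differentiableAt one_ne_zero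

theorem ContDiffAt.pd2_pd1_eq_pd1_pd2 (hf : ContDiffAt ℝ 2 f p) :
    pd2 (pd1 f) p = pd1 (pd2 f) p := by
  have hdf : DifferentiableAt ℝ (fderiv ℝ f) p :=
    (hf.fderiv_right (m := 1) (by norm_num)).differentiableAt one_ne_zero
  change fderiv ℝ (fun q => fderiv ℝ f q (1, 0)) p (0, 1) =
    fderiv ℝ (fun q => fderiv ℝ f q (0, 1)) p (1, 0)
  rw [fderiv_clm_apply hdf (differentiableAt_const _),
    fderiv_clm_apply hdf (differentiableAt_const _)]
  simpa using hf.isSymmSndFDerivAt (by simp) (0, 1) (1, 0)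

theorem ContDiffOn.differentiableOn_pd1 {U : Set (ℝ × ℝ)} (hf : ContDiffOn ℝ 2 f U)
    (hU : IsOpen U) : DifferentiableOn ℝ (pd1 f) U := fun _ hp =>
  (hf.contDiffAt (hU.mem_nhds hp)).differentiableAt_pd1.differentiableWithinAt

theorem IsOpen.exists_eq_const_of_pd1_eq_zero_of_pd2_eq_zero {s : Set (ℝ × ℝ)}
    (hs : IsOpen s) (hs' : IsPreconnected s) (hf : DifferentiableOn ℝ f s)
    (h1 : ∀ p ∈ s, pd1 f p = 0) (h2 : ∀ p ∈ s, pd2 f p = 0) : ∃ c, ∀ p ∈ s, f p = c :=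
  hs.exists_is_const_of_fderiv_eq_zero hs' hf fun p hp =>
    fderiv_eq_zero_of_pd1_eq_zero_of_pd2_eq_zero (h1 p hp) (h2 p hp)

end Partials

section Equation

variable {U : Set (ℝ × ℝ)} {D : ℝ × ℝ → ℝ}

theorem ContDiffAt.pd2_pd1_eq_sq {p : ℝ × ℝ} (hD : ContDiffAt ℝ 2 D p)
    (h1 : pd1 (pd1 D) p = 0) (h2 : pd2 D =ᶠ[𝓝 p] fun q => D q * pd1 D q) :
    pd2 (pd1 D) p = pd1 D p ^ 2 := by
  rw [hD.pd2_pd1_eq_pd1_pd2, pd1, h2.fderiv_eq, ← pd1,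
    pd1_mul (hD.differentiableAt two_ne_zero) hD.differentiableAt_pd1, h1]
  ring

theorem pd2_pd1_eq_sq_of_mem (hU : IsOpen U) (hD : ContDiffOn ℝ 2 D U)
    (h1 : ∀ p ∈ U, pd1 (pd1 D) p = 0) (h2 : ∀ p ∈ U, pd2 D p = D p * pd1 D p)
    {p : ℝ × ℝ} (hp : p ∈ U) : pd2 (pd1 D) p = pd1 D p ^ 2 :=
  (hD.contDiffAt (hU.mem_nhds hp)).pd2_pd1_eq_sq (h1 p hp) <|
    eventually_of_mem (hU.mem_nhds hp) h2

theorem exists_div_pd1_sub_fst_eq_const (hU : IsOpen U) (hUc : IsPreconnected U)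
    (hD : ContDiffOn ℝ 2 D U) (h1 : ∀ p ∈ U, pd1 (pd1 D) p = 0)
    (h2 : ∀ p ∈ U, pd2 D p = D p * pd1 D p) (h3 : ∀ p ∈ U, pd1 D p ≠ 0) :
    ∃ k, ∀ q ∈ U, D q / pd1 D q - q.1 = k := by
  have hDd := hD.differentiableOn two_ne_zero
  have hud := hD.differentiableOn_pd1 hU
  have hg : DifferentiableOn ℝ (fun q => D q / pd1 D q - q.1) U := by
    simpa only [div_eq_mul_inv] using (hDd.fun_mul (hud.fun_inv h3)).fun_sub differentiableOn_fst
  refine hU.exists_eq_const_of_pd1_eq_zero_of_pd2_eq_zero hUc hg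
    (fun q hq => ?_) (fun q hq => ?_)
  all_goals
    have hgq := hg.differentiableAt (hU.mem_nhds hq)
    have hDq := hDd.differentiableAt (hU.mem_nhds hq)
    have huq := hud.differentiableAt (hU.mem_nhds hq)
    have hq0 := h3 q hq
  · refine (hgq.hasDerivAt_pd1.unique
      ((hDq.hasDerivAt_pd1.div huq.hasDerivAt_pd1 hq0).sub (hasDerivAt_id _))).trans ?_
    rw [h1 q hq]
    field_simp
    ring
  · refine (hgq.hasDerivAt_pd2.unique
      ((hDq.hasDerivAt_pd2.div huq.hasDerivAt_pd2 hq0).sub (hasDerivAt_const _ _))).trans ?_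
    rw [h2 q hq, pd2_pd1_eq_sq_of_mem hU hD h1 h2 hq]
    field_simp
    ring

theorem exists_inv_pd1_add_snd_eq_const (hU : IsOpen U) (hUc : IsPreconnected U)
    (hD : ContDiffOn ℝ 2 D U) (h1 : ∀ p ∈ U, pd1 (pd1 D) p = 0)
    (h2 : ∀ p ∈ U, pd2 D p = D p * pd1 D p) (h3 : ∀ p ∈ U, pd1 D p ≠ 0) :
    ∃ k, ∀ q ∈ U, (pd1 D q)⁻¹ + q.2 = k := by
  have hud := hD.differentiableOn_pd1 hU
  refine hU.exists_eq_const_of_pd1_eq_zero_of_pd2_eq_zero hUc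
    ((hud.inv h3).add differentiableOn_snd) (fun q hq => ?_) (fun q hq => ?_)
  all_goals
    have huq := hud.differentiableAt (hU.mem_nhds hq)
    have hq0 := h3 q hq
  · refine (((huq.inv hq0).add differentiableAt_snd).hasDerivAt_pd1.unique
      ((huq.hasDerivAt_pd1.inv hq0).add (hasDerivAt_const _ _))).trans ?_
    rw [h1 q hq]
    simp
  · refine (((huq.inv hq0).add differentiableAt_snd).hasDerivAt_pd2.unique
      ((huq.hasDerivAt_pd2.inv hq0).add (hasDerivAt_id _))).trans ?_
    rw [pd2_pd1_eq_sq_of_mem hU hD h1 h2 hq]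
    field_simp
    ring

end Equation

theorem stmt2 (U : Set (ℝ × ℝ)) (hU : IsOpen U) (hUc : IsConnected U)
    (D : ℝ × ℝ → ℝ) (hD : ContDiffOn ℝ 2 D U)
    (h1 : ∀ p ∈ U, pd1 (pd1 D) p = 0)
    (h2 : ∀ p ∈ U, pd2 D p = D p * pd1 D p)
    (h3 : ∀ p ∈ U, pd1 D p ≠ 0) :
    ∀ p ∈ U, ∃ V : Set (ℝ × ℝ), IsOpen V ∧ p ∈ V ∧ V ⊆ U ∧
      ∃ k₁ k₂ : ℝ, ∀ q ∈ V, D q = (q.1 + k₁) / (k₂ - q.2) := by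
  intro p hp
  obtain ⟨k₁, hk₁⟩ := exists_div_pd1_sub_fst_eq_const hU hUc.isPreconnected hD h1 h2 h3
  obtain ⟨k₂, hk₂⟩ := exists_inv_pd1_add_snd_eq_const hU hUc.isPreconnected hD h1 h2 h3
  refine ⟨U, hU, hp, subset_rfl, k₁, k₂, fun q hq => ?_⟩
  rw [← hk₁ q hq, ← hk₂ q hq, add_sub_cancel, add_sub_cancel_right, div_inv_eq_mul,
    div_mul_cancel₀ _ (h3 q hq)]
end

section
/- Let ω : ℝ → ℝ be C¹ and let a : U → ℝ be a C¹ function on an open set U ⊆ ℝ² satisfying x² + (a(x¹,x²)/2)·x¹ + ω'(a(x¹,x²)) = 0 for all (x¹,x²) ∈ U. Define φ(x¹,x²) = x²·a + (a²/4)·x¹ + ω(a). Then ∂φ/∂x² = a and 4·∂φ/∂x¹ − (∂φ/∂x²)² = 0 on U. -/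
/-!
Envelope theorem: `φ x = F (x, a x)` for `F = legendreFamily ω`, and the implicit equation says
exactly that `∂F/∂t = x² + (t/2) x¹ + ω' t` vanishes along `t = a x`. Hence the chain rule sees
only the explicit dependence on `x`: `∂φ/∂x² = a` and `∂φ/∂x¹ = a²/4`.
-/

open ContinuousLinearMap

theorem HasFDerivAt.comp_graph_of_partial_eq_zero {E : Type*} [NormedAddCommGroup E]
    [NormedSpace ℝ E] {G : E × ℝ → ℝ} {Gx : E →L[ℝ] ℝ} {a : E → ℝ} {p : E}
    (hG : HasFDerivAt G (Gx.coprod 0) (p, a p)) (ha : DifferentiableAt ℝ a p) :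
    HasFDerivAt (fun x => G (x, a x)) Gx p := by
  have h := hG.comp p ((hasFDerivAt_id p).prodMk ha.hasFDerivAt)
  rwa [show (Gx.coprod 0).comp ((ContinuousLinearMap.id ℝ E).prod (fderiv ℝ a p)) = Gx by
    ext; simp] at h

noncomputable def legendreFamily (ω : ℝ → ℝ) (z : (ℝ × ℝ) × ℝ) : ℝ :=
  z.1.2 * z.2 + (z.2 ^ 2 / 4) * z.1.1 + ω z.2

theorem hasFDerivAt_legendreFamily {ω : ℝ → ℝ} {x : ℝ × ℝ} {t : ℝ}
    (hω : DifferentiableAt ℝ ω t) :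
    HasFDerivAt (legendreFamily ω)
      ((t • snd ℝ ℝ ℝ + (t ^ 2 / 4) • fst ℝ ℝ ℝ).coprod
        ((x.2 + t / 2 * x.1 + deriv ω t) • ContinuousLinearMap.id ℝ ℝ)) (x, t) := by
  have hx₁ : HasFDerivAt (fun z : (ℝ × ℝ) × ℝ => z.1.1)
      ((fst ℝ ℝ ℝ).comp (fst ℝ (ℝ × ℝ) ℝ)) (x, t) :=
    hasFDerivAt_fst.comp _ hasFDerivAt_fst
  have hx₂ : HasFDerivAt (fun z : (ℝ × ℝ) × ℝ => z.1.2)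
      ((snd ℝ ℝ ℝ).comp (fst ℝ (ℝ × ℝ) ℝ)) (x, t) :=
    hasFDerivAt_snd.comp _ hasFDerivAt_fst
  have ht : HasFDerivAt (fun z : (ℝ × ℝ) × ℝ => z.2) (snd ℝ (ℝ × ℝ) ℝ) (x, t) :=
    hasFDerivAt_snd
  have ht_sq := (ht.pow 2).mul_const (4⁻¹ : ℝ)
  refine (((hx₂.mul ht).add (ht_sq.mul hx₁)).add
    (hω.hasDerivAt.comp_hasFDerivAt (x, t) ht)).congr_fderiv ?_
  ext <;> simp <;> ring

theorem stmt8 (U : Set (ℝ × ℝ)) (hU : IsOpen U)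
    (ω : ℝ → ℝ) (hω : ContDiff ℝ 1 ω)
    (a : ℝ × ℝ → ℝ) (ha : ContDiffOn ℝ 1 a U)
    (himp : ∀ p ∈ U, p.2 + (a p / 2) * p.1 + deriv ω (a p) = 0)
    (φ : ℝ × ℝ → ℝ)
    (hφ : ∀ p ∈ U, φ p = p.2 * a p + (a p ^ 2 / 4) * p.1 + ω (a p)) :
    ∀ p ∈ U, pd2 φ p = a p ∧ 4 * pd1 φ p - (pd2 φ p) ^ 2 = 0 := by
  intro p hp
  have hF := hasFDerivAt_legendreFamily (x := p) (hω.differentiable one_ne_zero (a p))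
  rw [himp p hp, zero_smul] at hF
  have hφ_deriv : HasFDerivAt φ (a p • snd ℝ ℝ ℝ + (a p ^ 2 / 4) • fst ℝ ℝ ℝ) p := by
    refine (hF.comp_graph_of_partial_eq_zero ((ha.differentiableOn one_ne_zero).differentiableAt
      (hU.mem_nhds hp))).congr_of_eventuallyEq ?_
    filter_upwards [hU.mem_nhds hp] with q hq using hφ q hq
  have h₂ : pd2 φ p = a p := by simp [pd2, hφ_deriv.fderiv]
  have h₁ : pd1 φ p = a p ^ 2 / 4 := by simp [pd1, hφ_deriv.fderiv]
  refine ⟨h₂, ?_⟩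
  rw [h₁, h₂]
  ring
end

section
/- The function φ(x¹,x²) = [(x¹)² + k₂x¹ + k₃]/(k₁ − x²) + k₄ satisfies the system: 2·∂²φ/∂x¹∂x² − (∂φ/∂x¹)·∂²φ/∂(x¹)² = 0, ∂²φ/∂(x²)² − (∂φ/∂x²)·∂²φ/∂(x¹)² = 0, and ∂³φ/∂(x¹)³ = 0, on the region x² ≠ k₁. -/
open Polynomial Set

theorem Set.EqOn.pd1 {f g : ℝ × ℝ → ℝ} {s : Set (ℝ × ℝ)} (hs : IsOpen s) (h : EqOn f g s) :
    EqOn (pd1 f) (pd1 g) s := fun p hp => by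
  rw [_root_.pd1, _root_.pd1, (Filter.eventuallyEq_of_mem (hs.mem_nhds hp) h).fderiv_eq]

theorem Set.EqOn.pd2 {f g : ℝ × ℝ → ℝ} {s : Set (ℝ × ℝ)} (hs : IsOpen s) (h : EqOn f g s) :
    EqOn (pd2 f) (pd2 g) s := fun p hp => by
  rw [_root_.pd2, _root_.pd2, (Filter.eventuallyEq_of_mem (hs.mem_nhds hp) h).fderiv_eq]

theorem pd1_add_const (f : ℝ × ℝ → ℝ) (c : ℝ) : pd1 (fun q => f q + c) = pd1 f := by
  ext p
  rw [pd1, pd1, fderiv_add_const]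

theorem pd2_add_const (f : ℝ × ℝ → ℝ) (c : ℝ) : pd2 (fun q => f q + c) = pd2 f := by
  ext p
  rw [pd2, pd2, fderiv_add_const]

section SeparableProduct

variable {f g : ℝ → ℝ} {f' g' : ℝ} {p : ℝ × ℝ}

theorem hasFDerivAt_mul_separable (hf : HasDerivAt f f' p.1) (hg : HasDerivAt g g' p.2) :
    HasFDerivAt (fun q : ℝ × ℝ => f q.1 * g q.2)
      (f p.1 • g' • ContinuousLinearMap.snd ℝ ℝ ℝ + g p.2 • f' • ContinuousLinearMap.fst ℝ ℝ ℝ) p :=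
  (hf.comp_hasFDerivAt p hasFDerivAt_fst).mul (hg.comp_hasFDerivAt p hasFDerivAt_snd)

theorem pd1_mul_separable (hf : HasDerivAt f f' p.1) (hg : HasDerivAt g g' p.2) :
    pd1 (fun q : ℝ × ℝ => f q.1 * g q.2) p = f' * g p.2 := by
  simp [pd1, (hasFDerivAt_mul_separable hf hg).fderiv, mul_comm]

theorem pd2_mul_separable (hf : HasDerivAt f f' p.1) (hg : HasDerivAt g g' p.2) :
    pd2 (fun q : ℝ × ℝ => f q.1 * g q.2) p = f p.1 * g' := by
  simp [pd2, (hasFDerivAt_mul_separable hf hg).fderiv]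

end SeparableProduct

theorem hasDerivAt_const_sub_zpow {k y : ℝ} (m : ℤ) (hy : y ≠ k) :
    HasDerivAt (fun y => (k - y) ^ m) (-(m * (k - y) ^ (m - 1))) y :=
  (hasDerivAt_zpow m (k - y) (.inl (sub_ne_zero.2 hy.symm))).comp_const_sub k y

noncomputable def polyMulZpow (P : ℝ[X]) (k : ℝ) (m : ℤ) (q : ℝ × ℝ) : ℝ :=
  P.eval q.1 * (k - q.2) ^ m

section PolyMulZpow

variable (P : ℝ[X]) {k : ℝ} (m : ℤ) {q : ℝ × ℝ}

theorem pd1_polyMulZpow (hq : q.2 ≠ k) :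
    pd1 (polyMulZpow P k m) q = polyMulZpow (derivative P) k m q :=
  pd1_mul_separable (P.hasDerivAt q.1) (hasDerivAt_const_sub_zpow m hq)

theorem pd2_polyMulZpow (hq : q.2 ≠ k) :
    pd2 (polyMulZpow P k m) q = polyMulZpow (C (-m : ℝ) * P) k (m - 1) q := by
  refine (pd2_mul_separable (P.hasDerivAt q.1) (hasDerivAt_const_sub_zpow m hq)).trans ?_
  simp only [polyMulZpow, eval_mul, eval_C]
  ring

end PolyMulZpow

theorem stmt12 (k₁ k₂ k₃ k₄ : ℝ) (φ : ℝ × ℝ → ℝ)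
    (hφ : ∀ p : ℝ × ℝ, p.2 ≠ k₁ →
      φ p = (p.1 ^ 2 + k₂ * p.1 + k₃) / (k₁ - p.2) + k₄) :
    ∀ p : ℝ × ℝ, p.2 ≠ k₁ →
      2 * pd2 (pd1 φ) p - pd1 φ p * pd1 (pd1 φ) p = 0 ∧
      pd2 (pd2 φ) p - pd2 φ p * pd1 (pd1 φ) p = 0 ∧
      pd1 (pd1 (pd1 φ)) p = 0 := by
  set U := {q : ℝ × ℝ | q.2 ≠ k₁}
  have hU : IsOpen U := isOpen_ne_fun continuous_snd continuous_const
  set P : ℝ[X] := X ^ 2 + C k₂ * X + C k₃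
  have hφP : EqOn φ (fun q => polyMulZpow P k₁ (-1) q + k₄) U := fun q hq => by
    simp [hφ q hq, polyMulZpow, P, div_eq_mul_inv]
  have h1 : EqOn (pd1 φ) (polyMulZpow (derivative P) k₁ (-1)) U := fun q hq => by
    rw [hφP.pd1 hU hq, pd1_add_const, pd1_polyMulZpow _ _ hq]
  have h2 : EqOn (pd2 φ) (polyMulZpow P k₁ (-2)) U := fun q hq => by
    rw [hφP.pd2 hU hq, pd2_add_const, pd2_polyMulZpow _ _ hq]
    norm_num
  have h11 : EqOn (pd1 (pd1 φ)) (polyMulZpow (derivative (derivative P)) k₁ (-1)) U :=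
    fun q hq => by rw [h1.pd1 hU hq, pd1_polyMulZpow _ _ hq]
  intro p hp
  rw [h1.pd2 hU hp, h2.pd2 hU hp, h11.pd1 hU hp, h1 hp, h2 hp, h11 hp, pd2_polyMulZpow _ _ hp,
    pd2_polyMulZpow _ _ hp, pd1_polyMulZpow _ _ hp]
  have hk : k₁ - p.2 ≠ 0 := sub_ne_zero.2 (Ne.symm hp)
  simp only [polyMulZpow, Int.reduceNeg, Int.cast_neg, Int.cast_one, neg_neg, map_one,
    derivative_X_pow_succ, Nat.cast_one, map_add, pow_one, derivative_mul, derivative_C, zero_mul,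
    derivative_X, mul_one, zero_add, add_zero, one_mul, eval_add, eval_mul, eval_one, eval_X, eval_C,
    Int.reduceSub, zpow_neg, zpow_ofNat, derivative_one, Int.cast_ofNat, eval_pow, eval_zero, and_true,
    P]
  constructor <;> field_simp <;> ring
end
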